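/- arXiv:1705.03914 — 2 statements merged into one kernel-verified Lean document; each statement's English description precedes it below -/
import Mathlib

section
/- (Fernique's theorem, general version) Let V be a separable topological vector space and φ: V → [0,∞] Borel measurable. Suppose there are constants c ≥ 1 and c₁, c₂ > 1 with φ(−x) = φ(x), c₂ φ(x) ≤ φ(√2 x) ≤ c₁ φ(x), and φ(x+y) ≤ c(φ(x) + φ(y)) for all x, y ∈ V. Let X be a V-valued random variable such that if Y is an independent copy of X then (φ(X), φ(Y)) has the same joint distribution as (φ((X−Y)/√2), φ((X+Y)/√2)). If P(φ(X) < ∞) = 1, then there exist α, β > 0 with E[exp(α φ(X)^β)] < ∞. -/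
/-!
Write `X' = (X - Y) / √2` and `Y' = (X + Y) / √2`. Since `Y' = √2 X - X' = √2 Y + X'`, on the
event `{φ X' ≤ s, φ Y' > c (c₁ r + s)}` both `φ X` and `φ Y` exceed `r`; rotation invariance and
independence turn this into `P(φ X ≤ s) · P(φ X > c (c₁ r + s)) ≤ P(φ X > r)²`. Once
`P(φ X ≤ s) > 1/2`, iterating along the levels `s Kⁿ` with `K = c (c₁ + 1)` gives tails
`P(φ X > s Kⁿ) ≤ θ^(2ⁿ)` with `θ < 1`. The levels grow only geometrically, so for
`β = log 2 / log K` the tails of `(φ X)^β` decay exponentially and `exp (α (φ X)^β)` is integrable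
for small `α > 0`.
-/

open MeasureTheory ProbabilityTheory Filter
open scoped ENNReal

section Rotation

variable {V : Type*} [AddCommGroup V] [Module ℝ V] {φ : V → ℝ≥0∞} {C C₁ : ℝ≥0∞}

lemma apply_inv_sqrt_two_smul_add_le (hsymm : ∀ x, φ (-x) = φ x)
    (hup : ∀ x, φ (√2 • x) ≤ C₁ * φ x) (htri : ∀ x y, φ (x + y) ≤ C * (φ x + φ y)) (x y : V) :
    φ ((√2)⁻¹ • (x + y)) ≤ C * (C₁ * φ x + φ ((√2)⁻¹ • (x - y))) := by
  have hsplit : (√2)⁻¹ • (x + y) = √2 • x + -((√2)⁻¹ • (x - y)) := by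
    have h : √2 - (√2)⁻¹ = (√2)⁻¹ := by field_simp; norm_num
    calc (√2)⁻¹ • (x + y) = (√2 - (√2)⁻¹) • x + (√2)⁻¹ • y := by rw [h, smul_add]
      _ = √2 • x + -((√2)⁻¹ • (x - y)) := by module
  calc φ ((√2)⁻¹ • (x + y)) ≤ C * (φ (√2 • x) + φ (-((√2)⁻¹ • (x - y)))) := hsplit ▸ htri _ _
    _ ≤ C * (C₁ * φ x + φ ((√2)⁻¹ • (x - y))) := by rw [hsymm]; gcongr; exact hup x

lemma lt_apply_of_apply_inv_sqrt_two_smul (hsymm : ∀ x, φ (-x) = φ x)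
    (hup : ∀ x, φ (√2 • x) ≤ C₁ * φ x) (htri : ∀ x y, φ (x + y) ≤ C * (φ x + φ y))
    {x y : V} {r s : ℝ≥0∞} (hs : φ ((√2)⁻¹ • (x - y)) ≤ s)
    (ht : C * (C₁ * r + s) < φ ((√2)⁻¹ • (x + y))) :
    r < φ x ∧ r < φ y := by
  have key : ∀ a b : V, φ ((√2)⁻¹ • (a - b)) ≤ s → C * (C₁ * r + s) < φ ((√2)⁻¹ • (a + b)) →
      r < φ a := by
    intro a b hs ht
    contrapose! ht
    calc φ ((√2)⁻¹ • (a + b)) ≤ C * (C₁ * φ a + φ ((√2)⁻¹ • (a - b))) :=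
          apply_inv_sqrt_two_smul_add_le hsymm hup htri a b
      _ ≤ C * (C₁ * r + s) := by gcongr
  refine ⟨key x y hs ht, key y x ?_ (add_comm x y ▸ ht)⟩
  rwa [← neg_sub, smul_neg, hsymm]

end Rotation

lemma measure_le_mul_measure_gt_le_sq {Ω : Type*} [MeasurableSpace Ω] {P : Measure Ω}
    [IsProbabilityMeasure P] {Z W Z' W' : Ω → ℝ≥0∞} (hind : IndepFun Z W P)
    (hident : IdentDistrib W Z P P)
    (hlaw : P.map (fun ω => (Z ω, W ω)) = P.map (fun ω => (Z' ω, W' ω))) {r s t : ℝ≥0∞}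
    (hincl : ∀ ω, Z' ω ≤ s → t < W' ω → r < Z ω ∧ r < W ω) :
    P {ω | Z ω ≤ s} * P {ω | t < Z ω} ≤ P {ω | r < Z ω} ^ 2 := by
  have hpair : AEMeasurable (fun ω => (Z ω, W ω)) P :=
    hident.aemeasurable_snd.prodMk hident.aemeasurable_fst
  -- `(Z', W')` need not be measurable (addition on `V` need not be), but its law is nonzero.
  have hpair' : AEMeasurable (fun ω => (Z' ω, W' ω)) P :=
    .of_map_ne_zero (hlaw ▸ (Measure.isProbabilityMeasure_map hpair).ne_zero)
  have hrect : MeasurableSet (Set.Iic s ×ˢ Set.Ioi t) := measurableSet_Iic.prod measurableSet_Ioi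
  calc P {ω | Z ω ≤ s} * P {ω | t < Z ω}
      = P (Z ⁻¹' Set.Iic s ∩ W ⁻¹' Set.Ioi t) := by
        rw [hind.measure_inter_preimage_eq_mul _ _ measurableSet_Iic measurableSet_Ioi,
          hident.measure_mem_eq measurableSet_Ioi]
        rfl
    _ = P.map (fun ω => (Z' ω, W' ω)) (Set.Iic s ×ˢ Set.Ioi t) := by
        rw [← hlaw, Measure.map_apply_of_aemeasurable hpair hrect]
        rfl
    _ ≤ P (Z ⁻¹' Set.Ioi r ∩ W ⁻¹' Set.Ioi r) := by
        rw [Measure.map_apply_of_aemeasurable hpair' hrect]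
        exact measure_mono fun ω ⟨hs, ht⟩ => hincl ω hs ht
    _ = P {ω | r < Z ω} ^ 2 := by
        rw [hind.measure_inter_preimage_eq_mul _ _ measurableSet_Ioi measurableSet_Ioi,
          hident.measure_mem_eq measurableSet_Ioi, sq]
        rfl

lemma ENNReal.two_mul_le_pow_two_pow_of_mul_le_sq {p : ℕ → ℝ≥0∞} {q : ℝ≥0∞} (hq : 2⁻¹ ≤ q)
    (h : ∀ n, q * p (n + 1) ≤ p n ^ 2) (n : ℕ) : 2 * p n ≤ (2 * p 0) ^ 2 ^ n := by
  induction n with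
  | zero => simp
  | succ n ih =>
    have h2q : 1 ≤ 2 * q := by
      calc (1 : ℝ≥0∞) = 2 * 2⁻¹ := (ENNReal.mul_inv_cancel two_ne_zero ENNReal.ofNat_ne_top).symm
        _ ≤ 2 * q := by gcongr
    calc 2 * p (n + 1) ≤ 2 * (2 * q * p (n + 1)) := by gcongr; exact le_mul_of_one_le_left' h2q
      _ = 2 * 2 * (q * p (n + 1)) := by ring
      _ ≤ 2 * 2 * p n ^ 2 := by gcongr; exact h n
      _ = (2 * p n) ^ 2 := by ring
      _ ≤ ((2 * p 0) ^ 2 ^ n) ^ 2 := by gcongr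
      _ = (2 * p 0) ^ 2 ^ (n + 1) := by rw [← pow_mul, pow_succ]

lemma ENNReal.exists_pos_forall_pow_le_exp {θ : ℝ≥0∞} (hθ : θ < 1) :
    ∃ l : ℝ, 0 < l ∧ ∀ k : ℕ, θ ^ k ≤ ENNReal.ofReal (Real.exp (-(l * k))) := by
  set m : ℝ := max θ.toReal 2⁻¹
  have hm0 : 0 < m := lt_max_of_lt_right (by norm_num)
  have hm1 : m < 1 := max_lt (ENNReal.toReal_lt_of_lt_ofReal (by simpa using hθ)) (by norm_num)
  refine ⟨-Real.log m, neg_pos.mpr (Real.log_neg hm0 hm1), fun k => ?_⟩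
  calc θ ^ k = ENNReal.ofReal (θ.toReal ^ k) := by
        rw [ENNReal.ofReal_pow ENNReal.toReal_nonneg, ENNReal.ofReal_toReal hθ.ne_top]
    _ ≤ ENNReal.ofReal (m ^ k) := by gcongr; exact le_max_left _ _
    _ = ENNReal.ofReal (Real.exp (-(-Real.log m * k))) := by
        rw [neg_mul, neg_neg, mul_comm, Real.exp_nat_mul, Real.exp_log hm0]

lemma Real.mul_pow_rpow_of_rpow_eq {s K β a : ℝ} (hs : 0 ≤ s) (hK : 0 ≤ K) (hKβ : K ^ β = a)
    (m : ℕ) : (s * K ^ m) ^ β = s ^ β * a ^ m := by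
  rw [Real.mul_rpow hs (by positivity), ← Real.rpow_natCast K m, ← Real.rpow_mul hK,
    mul_comm (m : ℝ), Real.rpow_mul hK, hKβ, Real.rpow_natCast]

lemma exists_mul_pow_lt_le_mul_pow_succ {s K z : ℝ} (hs : 0 < s) (hK : 1 < K) (hz : s < z) :
    ∃ n : ℕ, s * K ^ n < z ∧ z ≤ s * K ^ (n + 1) :=
  ((pow_right_strictMono₀ hK).const_mul hs).exists_between_of_tendsto_atTop
    ((tendsto_pow_atTop_atTop_of_one_lt hK).const_mul_atTop hs) (by simpa)

lemma lintegral_le_add_tsum_of_univ_subset {Ω ι : Type*} [MeasurableSpace Ω] [Countable ι]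
    {μ : Measure Ω} {f : Ω → ℝ≥0∞} {B : Set Ω} {A : ι → Set Ω}
    (hcover : Set.univ ⊆ B ∪ ⋃ i, A i) :
    ∫⁻ ω, f ω ∂μ ≤ ∫⁻ ω in B, f ω ∂μ + ∑' i, ∫⁻ ω in A i, f ω ∂μ :=
  calc ∫⁻ ω, f ω ∂μ = ∫⁻ ω in Set.univ, f ω ∂μ := (setLIntegral_univ _).symm
    _ ≤ ∫⁻ ω in B ∪ ⋃ i, A i, f ω ∂μ := lintegral_mono_set hcover
    _ ≤ ∫⁻ ω in B, f ω ∂μ + ∑' i, ∫⁻ ω in A i, f ω ∂μ :=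
        (lintegral_union_le _ _ _).trans (by gcongr; exact lintegral_iUnion_le _ _)

theorem exists_lintegral_exp_rpow_lt_top_of_measure_lt_le {Ω : Type*} [MeasurableSpace Ω]
    {μ : Measure Ω} [IsFiniteMeasure μ] {Z : Ω → ℝ} (hZ : ∀ ω, 0 ≤ Z ω) {s K l : ℝ}
    (hs : 0 < s) (hK : 1 < K) (hl : 0 < l)
    (htail : ∀ n : ℕ, μ {ω | s * K ^ n < Z ω} ≤ ENNReal.ofReal (Real.exp (-(l * 2 ^ n)))) :
    ∃ α β : ℝ, 0 < α ∧ 0 < β ∧ ∫⁻ ω, ENNReal.ofReal (Real.exp (α * Z ω ^ β)) ∂μ < ⊤ := by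
  set β := Real.log 2 / Real.log K
  have hβ : 0 < β := div_pos (Real.log_pos one_lt_two) (Real.log_pos hK)
  have hKβ : K ^ β = 2 := by
    rw [Real.rpow_def_of_pos (by linarith), mul_div_cancel₀ _ (Real.log_pos hK).ne',
      Real.exp_log two_pos]
  -- On `{Z ≤ s * K ^ (n + 1)}` this makes `α * Z ^ β ≤ l * 2 ^ n / 2`: half the decay rate of the
  -- tail at level `s * K ^ n`.
  set α := l / (4 * s ^ β)
  have hα : 0 < α := by positivity
  refine ⟨α, β, hα, hβ, ?_⟩
  have hbound : ∀ (m : ℕ) (z : ℝ), 0 ≤ z → z ≤ s * K ^ m → α * z ^ β ≤ l * 2 ^ m / 4 := by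
    intro m z hz hzm
    calc α * z ^ β ≤ α * (s * K ^ m) ^ β := by gcongr
      _ = l * 2 ^ m / 4 := by
        rw [Real.mul_pow_rpow_of_rpow_eq hs.le (by linarith) hKβ]
        simp only [α]
        field_simp
  set g := fun ω => ENNReal.ofReal (Real.exp (α * Z ω ^ β))
  have hcore : ∫⁻ ω in {ω | Z ω ≤ s}, g ω ∂μ
      ≤ ENNReal.ofReal (Real.exp (l / 4)) * μ {ω | Z ω ≤ s} := by
    refine (setLIntegral_mono measurable_const fun ω hω => ?_).trans_eq (setLIntegral_const _ _)
    refine ENNReal.ofReal_le_ofReal (Real.exp_le_exp.2 ?_)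
    simpa using hbound 0 (Z ω) (hZ ω) (by simpa using hω)
  have hannulus : ∀ n : ℕ, ∫⁻ ω in {ω | s * K ^ n < Z ω ∧ Z ω ≤ s * K ^ (n + 1)}, g ω ∂μ
      ≤ ENNReal.ofReal (Real.exp (-(l / 2))) ^ n := by
    intro n
    have hn : (n : ℝ) ≤ 2 ^ n := by exact_mod_cast Nat.lt_two_pow_self.le
    calc _ ≤ ∫⁻ _ in {ω | s * K ^ n < Z ω ∧ Z ω ≤ s * K ^ (n + 1)},
            ENNReal.ofReal (Real.exp (l * 2 ^ n / 2)) ∂μ := by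
          refine setLIntegral_mono measurable_const fun ω hω => ?_
          refine ENNReal.ofReal_le_ofReal (Real.exp_le_exp.2 ?_)
          calc α * Z ω ^ β ≤ l * 2 ^ (n + 1) / 4 := hbound _ _ (hZ ω) hω.2
            _ = l * 2 ^ n / 2 := by ring
      _ ≤ ENNReal.ofReal (Real.exp (l * 2 ^ n / 2)) * ENNReal.ofReal (Real.exp (-(l * 2 ^ n))) := by
          rw [setLIntegral_const]
          gcongr
          exact (measure_mono fun ω hω => hω.1).trans (htail n)
      _ = ENNReal.ofReal (Real.exp (-(l / 2) * 2 ^ n)) := by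
          rw [← ENNReal.ofReal_mul (Real.exp_nonneg _), ← Real.exp_add]
          ring_nf
      _ ≤ ENNReal.ofReal (Real.exp (-(l / 2) * n)) :=
          ENNReal.ofReal_le_ofReal (Real.exp_le_exp.2 (mul_le_mul_of_nonpos_left hn (by linarith)))
      _ = ENNReal.ofReal (Real.exp (-(l / 2))) ^ n := by
          rw [← ENNReal.ofReal_pow (Real.exp_nonneg _), ← Real.exp_nat_mul, mul_comm]
  calc ∫⁻ ω, g ω ∂μ
      ≤ ∫⁻ ω in {ω | Z ω ≤ s}, g ω ∂μ
          + ∑' n : ℕ, ∫⁻ ω in {ω | s * K ^ n < Z ω ∧ Z ω ≤ s * K ^ (n + 1)}, g ω ∂μ :=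
        lintegral_le_add_tsum_of_univ_subset fun ω _ => (le_or_gt (Z ω) s).imp id
          fun h => Set.mem_iUnion.2 (exists_mul_pow_lt_le_mul_pow_succ hs hK h)
    _ ≤ ENNReal.ofReal (Real.exp (l / 4)) * μ {ω | Z ω ≤ s}
          + ∑' n, ENNReal.ofReal (Real.exp (-(l / 2))) ^ n :=
        add_le_add hcore (ENNReal.tsum_le_tsum hannulus)
    _ < ⊤ := by
        refine ENNReal.add_lt_top.2 ⟨ENNReal.mul_lt_top ENNReal.ofReal_lt_top (measure_lt_top _ _),
          tsum_geometric_lt_top.2 ?_⟩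
        exact ENNReal.ofReal_lt_one.2 (Real.exp_lt_one_iff.2 (by linarith))

lemma exists_nat_lt_measure_le_of_ae_lt_top {Ω : Type*} [MeasurableSpace Ω] {P : Measure Ω}
    [IsProbabilityMeasure P] {Z : Ω → ℝ≥0∞} (hZ : Measurable Z) (hfin : ∀ᵐ ω ∂P, Z ω < ⊤)
    {a : ℝ≥0∞} (ha : a < 1) : ∃ n : ℕ, 0 < n ∧ a < P {ω | Z ω ≤ n} := by
  have hmono : Monotone fun n : ℕ => {ω | Z ω ≤ n} :=
    fun m n hmn ω (hω : Z ω ≤ m) => hω.trans (Nat.cast_le.2 hmn)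
  have hunion : P (⋃ n : ℕ, {ω | Z ω ≤ n}) = 1 := by
    have hmeas : MeasurableSet (⋃ n : ℕ, {ω | Z ω ≤ n}) := .iUnion fun n => hZ measurableSet_Iic
    rw [← prob_compl_eq_zero_iff hmeas]
    refine measure_mono_null (fun ω hω => ?_) (ae_iff.1 hfin)
    intro hlt
    obtain ⟨n, hn⟩ := ENNReal.exists_nat_gt hlt.ne
    exact hω (Set.mem_iUnion.2 ⟨n, hn.le⟩)
  have htend := tendsto_measure_iUnion_atTop (μ := P) hmono
  rw [hunion] at htend
  obtain ⟨n, hn⟩ := ((htend.eventually (lt_mem_nhds ha)).and (eventually_gt_atTop 0)).exists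
  exact ⟨n, hn.2, hn.1⟩

theorem exists_lintegral_exp_rpow_lt_top_of_measure_mul_measure_le_sq {Ω : Type*}
    [MeasurableSpace Ω] {P : Measure Ω} [IsProbabilityMeasure P] {Z : Ω → ℝ≥0∞}
    (hZ : Measurable Z) {c c₁ s : ℝ} (hc : 1 ≤ c) (hc₁ : 0 < c₁) (hs : 0 < s)
    (hq : 2⁻¹ < P {ω | Z ω ≤ ENNReal.ofReal s})
    (hkey : ∀ r : ℝ≥0∞, P {ω | Z ω ≤ ENNReal.ofReal s} *
        P {ω | ENNReal.ofReal c * (ENNReal.ofReal c₁ * r + ENNReal.ofReal s) < Z ω}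
          ≤ P {ω | r < Z ω} ^ 2) :
    ∃ α β : ℝ, 0 < α ∧ 0 < β ∧
      ∫⁻ ω, ENNReal.ofReal (Real.exp (α * (Z ω).toReal ^ β)) ∂P < ⊤ := by
  set K := c * (c₁ + 1)
  have hK : 1 < K := by nlinarith
  set p : ℕ → ℝ≥0∞ := fun n => P {ω | ENNReal.ofReal (s * K ^ n) < Z ω}
  have hthreshold : ∀ n : ℕ, ENNReal.ofReal c * (ENNReal.ofReal c₁ * ENNReal.ofReal (s * K ^ n)
      + ENNReal.ofReal s) ≤ ENNReal.ofReal (s * K ^ (n + 1)) := by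
    intro n
    have hKn : 1 ≤ K ^ n := one_le_pow₀ hK.le
    rw [← ENNReal.ofReal_mul hc₁.le, ← ENNReal.ofReal_add (by positivity) hs.le,
      ← ENNReal.ofReal_mul (by linarith)]
    refine ENNReal.ofReal_le_ofReal ?_
    calc c * (c₁ * (s * K ^ n) + s) ≤ c * (c₁ * (s * K ^ n) + s * K ^ n) := by gcongr; nlinarith
      _ = s * K ^ (n + 1) := by ring
  have hrec : ∀ n, P {ω | Z ω ≤ ENNReal.ofReal s} * p (n + 1) ≤ p n ^ 2 := fun n =>
    le_trans (mul_le_mul' le_rfl (measure_mono fun ω hω => (hthreshold n).trans_lt hω)) (hkey _)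
  have hp0 : 2 * p 0 < 1 := by
    have hcompl : p 0 = 1 - P {ω | Z ω ≤ ENNReal.ofReal s} := by
      have hset : {ω | ENNReal.ofReal (s * K ^ 0) < Z ω} = {ω | Z ω ≤ ENNReal.ofReal s}ᶜ := by
        ext; simp
      simp only [p, hset]
      exact prob_compl_eq_one_sub (hZ measurableSet_Iic)
    have hhalf : p 0 < 2⁻¹ := by
      rw [hcompl]
      refine ENNReal.sub_lt_of_lt_add prob_le_one ?_
      calc (1 : ℝ≥0∞) = 2⁻¹ + 2⁻¹ := ENNReal.inv_two_add_inv_two.symm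
        _ < 2⁻¹ + P {ω | Z ω ≤ ENNReal.ofReal s} := ENNReal.add_lt_add_left (by simp) hq
    calc 2 * p 0 < 2 * 2⁻¹ :=
          (ENNReal.mul_lt_mul_iff_right two_ne_zero ENNReal.ofNat_ne_top).2 hhalf
      _ = 1 := ENNReal.mul_inv_cancel two_ne_zero ENNReal.ofNat_ne_top
  obtain ⟨l, hl, hθ⟩ := ENNReal.exists_pos_forall_pow_le_exp hp0
  refine exists_lintegral_exp_rpow_lt_top_of_measure_lt_le (fun ω => ENNReal.toReal_nonneg)
    hs hK hl fun n => ?_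
  have hlevel : 0 < s * K ^ n := by positivity
  calc P {ω | s * K ^ n < (Z ω).toReal} ≤ p n := measure_mono fun ω (hω : _ < _) =>
        ((ENNReal.ofReal_lt_ofReal_iff (hlevel.trans hω)).2 hω).trans_le ENNReal.ofReal_toReal_le
    _ ≤ 2 * p n := le_mul_of_one_le_left' one_le_two
    _ ≤ (2 * p 0) ^ 2 ^ n := ENNReal.two_mul_le_pow_two_pow_of_mul_le_sq hq.le hrec n
    _ ≤ ENNReal.ofReal (Real.exp (-(l * 2 ^ n))) := by exact_mod_cast hθ (2 ^ n)

theorem stmt10_general {V : Type*} [AddCommGroup V] [Module ℝ V] [MeasurableSpace V]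
    (φ : V → ENNReal) (hφ : Measurable φ)
    (c c₁ : ℝ) (hc : 1 ≤ c) (hc₁ : 1 < c₁)
    (hsymm : ∀ x : V, φ (-x) = φ x)
    (hup : ∀ x : V, φ ((Real.sqrt 2) • x) ≤ ENNReal.ofReal c₁ * φ x)
    (htri : ∀ x y : V, φ (x + y) ≤ ENNReal.ofReal c * (φ x + φ y))
    {Ω : Type*} [MeasurableSpace Ω] (P : Measure Ω) [IsProbabilityMeasure P]
    (X Y : Ω → V) (hX : Measurable X) (hY : Measurable Y)
    (hXY : IndepFun X Y P) (hcopy : P.map Y = P.map X)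
    (hrot : P.map (fun ω => (φ (X ω), φ (Y ω)))
      = P.map (fun ω => (φ ((Real.sqrt 2)⁻¹ • (X ω - Y ω)),
                          φ ((Real.sqrt 2)⁻¹ • (X ω + Y ω)))))
    (hfin : ∀ᵐ ω ∂P, φ (X ω) < ⊤) :
    ∃ α β : ℝ, 0 < α ∧ 0 < β ∧
      ∫⁻ ω, ENNReal.ofReal (Real.exp (α * (φ (X ω)).toReal ^ β)) ∂P < ⊤ := by
  obtain ⟨n, hn, hq⟩ := exists_nat_lt_measure_le_of_ae_lt_top (hφ.comp hX) hfin
    (by norm_num : (2⁻¹ : ℝ≥0∞) < 1)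
  rw [← ENNReal.ofReal_natCast] at hq
  have hident : IdentDistrib (φ ∘ Y) (φ ∘ X) P P :=
    (IdentDistrib.mk hY.aemeasurable hX.aemeasurable hcopy).comp hφ
  refine exists_lintegral_exp_rpow_lt_top_of_measure_mul_measure_le_sq (hφ.comp hX) hc
    (by linarith : 0 < c₁) (Nat.cast_pos.2 hn) hq fun r => ?_
  exact measure_le_mul_measure_gt_le_sq (hXY.comp hφ hφ) hident hrot fun ω hs ht =>
    lt_apply_of_apply_inv_sqrt_two_smul hsymm hup htri hs ht

/-- Fernique's theorem, general version: let `V` be a separable topological vector space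
and `φ : V → [0,∞]` Borel measurable with `φ(−x) = φ(x)`,
`c₂ φ(x) ≤ φ(√2 x) ≤ c₁ φ(x)` and `φ(x+y) ≤ c(φ(x) + φ(y))` for constants `c ≥ 1`,
`c₁, c₂ > 1`. If `X` is a `V`-valued random variable such that for an independent copy `Y`
of `X` the pair `(φ(X), φ(Y))` has the same law as `(φ((X−Y)/√2), φ((X+Y)/√2))`, and
`φ(X) < ∞` a.s., then `E[exp(α φ(X)^β)] < ∞` for some `α, β > 0`. -/
theorem stmt10 {V : Type*} [AddCommGroup V] [Module ℝ V] [TopologicalSpace V]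
    [IsTopologicalAddGroup V] [ContinuousSMul ℝ V] [TopologicalSpace.SeparableSpace V]
    [MeasurableSpace V] [BorelSpace V]
    (φ : V → ENNReal) (hφ : Measurable φ)
    (c c₁ c₂ : ℝ) (hc : 1 ≤ c) (hc₁ : 1 < c₁) (hc₂ : 1 < c₂)
    (hsymm : ∀ x : V, φ (-x) = φ x)
    (hlow : ∀ x : V, ENNReal.ofReal c₂ * φ x ≤ φ ((Real.sqrt 2) • x))
    (hup : ∀ x : V, φ ((Real.sqrt 2) • x) ≤ ENNReal.ofReal c₁ * φ x)
    (htri : ∀ x y : V, φ (x + y) ≤ ENNReal.ofReal c * (φ x + φ y))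
    {Ω : Type*} [MeasurableSpace Ω] (P : Measure Ω) [IsProbabilityMeasure P]
    (X Y : Ω → V) (hX : Measurable X) (hY : Measurable Y)
    (hXY : IndepFun X Y P) (hcopy : P.map Y = P.map X)
    (hrot : P.map (fun ω => (φ (X ω), φ (Y ω)))
      = P.map (fun ω => (φ ((Real.sqrt 2)⁻¹ • (X ω - Y ω)),
                          φ ((Real.sqrt 2)⁻¹ • (X ω + Y ω)))))
    (hfin : ∀ᵐ ω ∂P, φ (X ω) < ⊤) :
    ∃ α β : ℝ, 0 < α ∧ 0 < β ∧
      ∫⁻ ω, ENNReal.ofReal (Real.exp (α * (φ (X ω)).toReal ^ β)) ∂P < ⊤ :=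
  stmt10_general φ hφ c c₁ hc hc₁ hsymm hup htri P X Y hX hY hXY hcopy hrot hfin
end

section
/- Let 0 < p < ∞, α > -1, and let c_k ≥ 0 with Σ c_k r^k having radius of convergence at least 1. Then ∫₀^1 (Σ_{k=0}^∞ c_k r^k)^p (1−r)^α dr < ∞ if and only if Σ_{n=0}^∞ 2^{-n(α+1)} (Σ_{k=2^n}^{2^{n+1}−1} c_k)^p < ∞. -/
/-!
Cut `[0, 1)` at `xₙ = 1 - 2⁻ⁿ`. On `[xₙ, xₙ₊₁)` the weight `(1 - r) ^ α` has mass `κ qⁿ`, where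
`q = 2 ^ (-(α + 1))`, and the increasing function `f r = ∑ cₖ rᵏ` lies between `f xₙ` and
`f xₙ₊₁`; so the integral is finite iff `∑ qⁿ (f xₙ) ^ p` is.

Let `Tₙ` be the dyadic block sums. Bernoulli gives `xₙ₊₂ ^ 2ⁿ⁺¹ ≥ 1/2`, hence `Tₙ ≤ 2 f xₙ₊₂`.
Conversely `f xₙ ≤ c₀ + ∑ₘ xₙ ^ 2ᵐ Tₘ` with `xₙ ^ 2ⁿ⁺ʲ ≤ 2 ^ (-2ʲ)`. This doubly exponential
decay beats any geometric factor: with `θ = q ^ (1/p)` one has `θⁿ xₙ ^ 2ᵐ ≤ C θ ^ |n - m| θᵐ`,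
and a discrete Young inequality for the kernel `θ ^ |n - m|`, valid for every `p > 0`, bounds
`∑ qⁿ (f xₙ) ^ p` by `∑ qᵐ Tₘ ^ p`.
-/

open MeasureTheory Set Filter Topology
open scoped ENNReal

lemma ENNReal.pow_rpow_comm (x : ℝ≥0∞) (n : ℕ) (y : ℝ) : (x ^ n) ^ y = (x ^ y) ^ n := by
  rw [← ENNReal.rpow_natCast_mul, mul_comm, ENNReal.rpow_mul_natCast]

lemma tsum_pow_mul_add_le {q : ℝ≥0∞} (hq0 : q ≠ 0) (hq : q ≠ ∞) (f : ℕ → ℝ≥0∞) (k : ℕ) :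
    ∑' n, q ^ n * f (n + k) ≤ q⁻¹ ^ k * ∑' n, q ^ n * f n := by
  have hshift : ∀ n, q ^ n * f (n + k) = q⁻¹ ^ k * (q ^ (n + k) * f (n + k)) := fun n => by
    rw [pow_add, ← mul_assoc, ← mul_assoc, mul_comm (q⁻¹ ^ k), mul_assoc (q ^ n),
      ← mul_pow, ENNReal.inv_mul_cancel hq0 hq, one_pow, mul_one]
  simp_rw [hshift, ENNReal.tsum_mul_left]
  exact mul_le_mul_right
    (ENNReal.tsum_comp_le_tsum_of_injective (add_left_injective k) (fun n => q ^ n * f n)) _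

lemma tsum_pow_dist_le (θ : ℝ≥0∞) (m : ℕ) : ∑' n, θ ^ Nat.dist n m ≤ 2 * (1 - θ)⁻¹ := by
  have hinj : Function.Injective (fun n : ℕ => (n : ℤ) - m) := fun a b h => by simpa using h
  calc ∑' n, θ ^ Nat.dist n m = ∑' n : ℕ, (fun z : ℤ => θ ^ z.natAbs) ((n : ℤ) - m) := by
        congr 1; ext n; congr 1; simp only [Nat.dist]; omega
    _ ≤ ∑' z : ℤ, θ ^ z.natAbs := ENNReal.tsum_comp_le_tsum_of_injective hinj _
    _ = ∑' n : ℕ, θ ^ n + ∑' n : ℕ, θ ^ (n + 1) :=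
        tsum_of_nat_of_neg_add_one ENNReal.summable ENNReal.summable
    _ ≤ ∑' n : ℕ, θ ^ n + ∑' n : ℕ, θ ^ n :=
        add_le_add_right (ENNReal.tsum_comp_le_tsum_of_injective (add_left_injective 1) _) _
    _ = 2 * (1 - θ)⁻¹ := by rw [ENNReal.tsum_geometric, two_mul]

lemma exists_tsum_rpow_tsum_pow_dist_mul_le {θ : ℝ≥0∞} (hθ : θ < 1) {p : ℝ} (hp : 0 < p) :
    ∃ K ≠ ∞, ∀ v : ℕ → ℝ≥0∞,
      ∑' n, (∑' m, θ ^ Nat.dist n m * v m) ^ p ≤ K * ∑' m, v m ^ p := by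
  set σ := θ ^ (2⁻¹ : ℝ)
  have hσ : σ < 1 := ENNReal.rpow_lt_one hθ (by norm_num)
  have hσp : σ ^ p < 1 := ENNReal.rpow_lt_one hσ hp
  have hθσ : ∀ d : ℕ, θ ^ d = σ ^ d * σ ^ d := fun d => by
    rw [← mul_pow, ← ENNReal.rpow_add_of_nonneg _ _ (by norm_num) (by norm_num)]
    norm_num
  set B := 2 * (1 - σ)⁻¹
  have hB : B ≠ ∞ := ENNReal.mul_ne_top (by norm_num) (ENNReal.inv_ne_top.2 (tsub_pos_of_lt hσ).ne')
  refine ⟨B ^ p * (2 * (1 - σ ^ p)⁻¹), ENNReal.mul_ne_top (ENNReal.rpow_ne_top_of_nonneg hp.le hB)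
    (ENNReal.mul_ne_top (by norm_num) (ENNReal.inv_ne_top.2 (tsub_pos_of_lt hσp).ne')), fun v => ?_⟩
  -- Split `θ ^ d = σ ^ d * σ ^ d`: one factor makes the row summable, and the other term
  -- `σ ^ d * v m` is at most the `ℓᵖ` norm of the row; no Hölder, so `p < 1` is allowed.
  have hrow : ∀ n, (∑' m, θ ^ Nat.dist n m * v m) ^ p
      ≤ B ^ p * ∑' m, (σ ^ p) ^ Nat.dist n m * v m ^ p := by
    intro n
    set Q := ∑' m, (σ ^ Nat.dist n m * v m) ^ p
    have hterm : ∀ m, σ ^ Nat.dist n m * v m ≤ Q ^ p⁻¹ := fun m =>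
      (ENNReal.le_rpow_inv_iff hp).2 (ENNReal.le_tsum m)
    have hsum : ∑' m, θ ^ Nat.dist n m * v m ≤ B * Q ^ p⁻¹ := calc
      _ = ∑' m, σ ^ Nat.dist m n * (σ ^ Nat.dist n m * v m) := by
        simp_rw [hθσ, mul_assoc, Nat.dist_comm]
      _ ≤ ∑' m, σ ^ Nat.dist m n * Q ^ p⁻¹ :=
        ENNReal.tsum_le_tsum fun m => mul_le_mul_right (hterm m) _
      _ ≤ B * Q ^ p⁻¹ := by
        rw [ENNReal.tsum_mul_right]; exact mul_le_mul_left (tsum_pow_dist_le σ n) _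
    calc _ ≤ (B * Q ^ p⁻¹) ^ p := ENNReal.rpow_le_rpow hsum hp.le
      _ = B ^ p * Q := by rw [ENNReal.mul_rpow_of_nonneg _ _ hp.le, ENNReal.rpow_inv_rpow hp.ne']
      _ = _ := by
        simp_rw [Q, ENNReal.mul_rpow_of_nonneg _ _ hp.le, ← ENNReal.pow_rpow_comm]
  calc ∑' n, (∑' m, θ ^ Nat.dist n m * v m) ^ p
      ≤ ∑' n, B ^ p * ∑' m, (σ ^ p) ^ Nat.dist n m * v m ^ p := ENNReal.tsum_le_tsum hrow
    _ = B ^ p * ∑' m, (∑' n, (σ ^ p) ^ Nat.dist n m) * v m ^ p := by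
        rw [ENNReal.tsum_mul_left, ENNReal.tsum_comm]
        exact congrArg _ (tsum_congr fun m => ENNReal.tsum_mul_right)
    _ ≤ B ^ p * ∑' m, 2 * (1 - σ ^ p)⁻¹ * v m ^ p := by
        gcongr with m
        exact tsum_pow_dist_le _ m
    _ = _ := by rw [ENNReal.tsum_mul_left, mul_assoc, mul_assoc, mul_assoc]

lemma exists_pow_two_pow_le_mul_pow {s θ : ℝ≥0∞} (hs : s < 1) (hθ0 : θ ≠ 0) (hθ1 : θ ≤ 1) :
    ∃ C ≠ ∞, 1 ≤ C ∧ ∀ j : ℕ, s ^ 2 ^ j ≤ C * θ ^ j := by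
  obtain ⟨N, hN⟩ := ((ENNReal.tendsto_pow_atTop_nhds_zero_of_lt_one hs).eventually
    (eventually_le_nhds (pos_iff_ne_zero.2 hθ0))).exists
  have hθN : θ⁻¹ ^ N * θ ^ N = 1 := by
    rw [← mul_pow, ENNReal.inv_mul_cancel hθ0 (ne_top_of_le_ne_top ENNReal.one_ne_top hθ1),
      one_pow]
  refine ⟨θ⁻¹ ^ N, ENNReal.pow_ne_top (ENNReal.inv_ne_top.2 hθ0),
    one_le_pow₀ (ENNReal.one_le_inv.2 hθ1), fun j => ?_⟩
  rcases le_total N j with h | h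
  · obtain ⟨i, rfl⟩ := Nat.exists_eq_add_of_le h
    calc s ^ 2 ^ (N + i) = (s ^ 2 ^ N) ^ 2 ^ i := by rw [pow_add, pow_mul]
      _ ≤ θ ^ 2 ^ i := by
        gcongr
        exact (pow_le_pow_right_of_le_one' hs.le Nat.lt_two_pow_self.le).trans hN
      _ ≤ θ ^ i := pow_le_pow_right_of_le_one' hθ1 Nat.lt_two_pow_self.le
      _ = θ⁻¹ ^ N * θ ^ (N + i) := by rw [pow_add, ← mul_assoc, hθN, one_mul]
  · calc s ^ 2 ^ j ≤ 1 := pow_le_one' hs.le _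
      _ = θ⁻¹ ^ N * θ ^ N := hθN.symm
      _ ≤ θ⁻¹ ^ N * θ ^ j := mul_le_mul_right (pow_le_pow_right_of_le_one' hθ1 h) _

lemma exists_tsum_geom_mul_rpow_tsum_le {q s : ℝ≥0∞} (hq0 : q ≠ 0) (hq1 : q < 1) (hs : s < 1)
    {p : ℝ} (hp : 0 < p) :
    ∃ K ≠ ∞, ∀ (w : ℕ → ℕ → ℝ≥0∞) (T : ℕ → ℝ≥0∞), (∀ n m, w n m ≤ 1) →
      (∀ n j, w n (n + j) ≤ s ^ 2 ^ j) →
      ∑' n, q ^ n * (∑' m, w n m * T m) ^ p ≤ K * ∑' m, q ^ m * T m ^ p := by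
  set θ := q ^ p⁻¹
  have hθ0 : θ ≠ 0 := (ENNReal.rpow_pos (pos_iff_ne_zero.2 hq0) hq1.ne_top).ne'
  have hθ1 : θ < 1 := ENNReal.rpow_lt_one hq1 (inv_pos.2 hp)
  have hθp : ∀ n : ℕ, (θ ^ n) ^ p = q ^ n := fun n => by
    rw [ENNReal.pow_rpow_comm, ENNReal.rpow_inv_rpow hp.ne']
  obtain ⟨C, hC, hC1, hsC⟩ :=
    exists_pow_two_pow_le_mul_pow hs (pow_ne_zero 2 hθ0) (pow_le_one' hθ1.le 2)
  obtain ⟨K, hK, hKv⟩ := exists_tsum_rpow_tsum_pow_dist_mul_le hθ1 hp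
  refine ⟨C ^ p * K, ENNReal.mul_ne_top (ENNReal.rpow_ne_top_of_nonneg hp.le hC) hK,
    fun w T hw1 hws => ?_⟩
  -- below the diagonal the weight `q ^ n` supplies the decay, above it the kernel does
  have hkernel : ∀ n m, θ ^ n * w n m ≤ C * (θ ^ Nat.dist n m * θ ^ m) := by
    intro n m
    rcases le_total m n with h | h
    · obtain ⟨j, rfl⟩ := Nat.exists_eq_add_of_le h
      calc θ ^ (m + j) * w (m + j) m ≤ θ ^ (m + j) * 1 := by gcongr; exact hw1 _ _
        _ ≤ C * (θ ^ Nat.dist (m + j) m * θ ^ m) := by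
          rw [mul_one, show Nat.dist (m + j) m = j by simp [Nat.dist], pow_add, mul_comm]
          exact le_mul_of_one_le_left' hC1
    · obtain ⟨j, rfl⟩ := Nat.exists_eq_add_of_le h
      calc θ ^ n * w n (n + j) ≤ θ ^ n * (C * (θ ^ 2) ^ j) := by
            gcongr; exact (hws n j).trans (hsC j)
        _ = C * (θ ^ Nat.dist n (n + j) * θ ^ (n + j)) := by
          rw [show Nat.dist n (n + j) = j by simp [Nat.dist]]
          ring
  have hrow : ∀ n, q ^ n * (∑' m, w n m * T m) ^ p
      ≤ C ^ p * (∑' m, θ ^ Nat.dist n m * (θ ^ m * T m)) ^ p := by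
    intro n
    rw [← hθp n, ← ENNReal.mul_rpow_of_nonneg _ _ hp.le, ← ENNReal.tsum_mul_left,
      ← ENNReal.mul_rpow_of_nonneg _ _ hp.le, ← ENNReal.tsum_mul_left]
    refine ENNReal.rpow_le_rpow (ENNReal.tsum_le_tsum fun m => ?_) hp.le
    calc θ ^ n * (w n m * T m) = θ ^ n * w n m * T m := (mul_assoc _ _ _).symm
      _ ≤ C * (θ ^ Nat.dist n m * θ ^ m) * T m := mul_le_mul_left (hkernel n m) _
      _ = C * (θ ^ Nat.dist n m * (θ ^ m * T m)) := by ring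
  calc ∑' n, q ^ n * (∑' m, w n m * T m) ^ p
      ≤ ∑' n, C ^ p * (∑' m, θ ^ Nat.dist n m * (θ ^ m * T m)) ^ p := ENNReal.tsum_le_tsum hrow
    _ ≤ C ^ p * (K * ∑' m, (θ ^ m * T m) ^ p) := by
      rw [ENNReal.tsum_mul_left]; gcongr; exact hKv _
    _ = C ^ p * K * ∑' m, q ^ m * T m ^ p := by
      simp_rw [ENNReal.mul_rpow_of_nonneg _ _ hp.le, hθp, mul_assoc]

lemma Finset.sum_range_two_pow_eq_add_sum_Ico {M : Type*} [AddCommMonoid M] (g : ℕ → M) (N : ℕ) :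
    ∑ k ∈ Finset.range (2 ^ N), g k
      = g 0 + ∑ m ∈ Finset.range N, ∑ k ∈ Finset.Ico (2 ^ m) (2 ^ (m + 1)), g k := by
  induction N with
  | zero => simp
  | succ N ih =>
    rw [Finset.sum_range_succ, ← add_assoc, ← ih, Finset.range_eq_Ico, Finset.range_eq_Ico,
      Finset.sum_Ico_consecutive g (Nat.zero_le _) (Nat.pow_le_pow_right two_pos N.le_succ)]

lemma ENNReal.tsum_eq_add_tsum_sum_Ico_two_pow (g : ℕ → ℝ≥0∞) :
    ∑' k, g k = g 0 + ∑' m, ∑ k ∈ Finset.Ico (2 ^ m) (2 ^ (m + 1)), g k := by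
  have hpow : Tendsto (fun N => ∑ k ∈ Finset.range (2 ^ N), g k) atTop (𝓝 (∑' k, g k)) :=
    (ENNReal.tendsto_nat_tsum g).comp (tendsto_pow_atTop_atTop_of_one_lt Nat.one_lt_two)
  refine tendsto_nhds_unique hpow ?_
  simp_rw [Finset.sum_range_two_pow_eq_add_sum_Ico]
  exact tendsto_const_nhds.add (ENNReal.tendsto_nat_tsum _)

lemma tsum_mul_pow_le_add_tsum_sum_Ico_mul_pow (c : ℕ → ℝ≥0∞) {z : ℝ≥0∞} (hz : z ≤ 1) :
    ∑' k, c k * z ^ k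
      ≤ c 0 + ∑' m, z ^ 2 ^ m * ∑ k ∈ Finset.Ico (2 ^ m) (2 ^ (m + 1)), c k := by
  rw [ENNReal.tsum_eq_add_tsum_sum_Ico_two_pow, pow_zero, mul_one]
  refine add_le_add_right (ENNReal.tsum_le_tsum fun m => ?_) _
  rw [Finset.mul_sum]
  refine Finset.sum_le_sum fun k hk => ?_
  rw [mul_comm]
  exact mul_le_mul_left (pow_le_pow_right_of_le_one' hz (Finset.mem_Ico.1 hk).1) _

lemma sum_Ico_mul_pow_le_tsum_mul_pow (c : ℕ → ℝ≥0∞) {z : ℝ≥0∞} (hz : z ≤ 1) (m : ℕ) :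
    z ^ 2 ^ (m + 1) * ∑ k ∈ Finset.Ico (2 ^ m) (2 ^ (m + 1)), c k ≤ ∑' k, c k * z ^ k := by
  rw [Finset.mul_sum]
  refine le_trans (Finset.sum_le_sum fun k hk => ?_) (ENNReal.sum_le_tsum _)
  rw [mul_comm]
  exact mul_le_mul_right (pow_le_pow_right_of_le_one' hz (Finset.mem_Ico.1 hk).2.le) _

noncomputable def dyadicPoint (n : ℕ) : ℝ := 1 - 2⁻¹ ^ n

lemma one_sub_dyadicPoint (n : ℕ) : 1 - dyadicPoint n = 2⁻¹ ^ n := sub_sub_cancel 1 _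

lemma dyadicPoint_nonneg (n : ℕ) : 0 ≤ dyadicPoint n :=
  sub_nonneg.2 (pow_le_one₀ (by norm_num) (by norm_num))

lemma dyadicPoint_lt_one (n : ℕ) : dyadicPoint n < 1 := sub_lt_self 1 (by positivity)

lemma dyadicPoint_monotone : Monotone dyadicPoint := fun _ _ h =>
  sub_le_sub_left (pow_le_pow_of_le_one (by norm_num) (by norm_num) h) 1

lemma dyadicPoint_pow_two_pow_le (n : ℕ) : dyadicPoint n ^ 2 ^ n ≤ 2⁻¹ := by
  have h := Real.one_sub_div_pow_le_exp_neg (n := 2 ^ n) (t := 1)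
    (by exact_mod_cast Nat.one_le_two_pow)
  calc dyadicPoint n ^ 2 ^ n = (1 - 1 / ((2 ^ n : ℕ) : ℝ)) ^ 2 ^ n := by
        simp [dyadicPoint, inv_pow]
    _ ≤ 2⁻¹ := h.trans (by simpa using Real.exp_neg_one_lt_half.le)

lemma inv_two_le_dyadicPoint_succ_pow (n : ℕ) : 2⁻¹ ≤ dyadicPoint (n + 1) ^ 2 ^ n := by
  have h := one_add_mul_le_pow (a := -(2⁻¹ : ℝ) ^ (n + 1)) (by
    have : (2⁻¹ : ℝ) ^ (n + 1) ≤ 1 := pow_le_one₀ (by norm_num) (by norm_num)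
    linarith) (2 ^ n)
  calc (2⁻¹ : ℝ) = 1 + ((2 ^ n : ℕ) : ℝ) * -(2⁻¹ : ℝ) ^ (n + 1) := by
        push_cast; rw [pow_succ, mul_neg, ← mul_assoc, ← mul_pow]; norm_num
    _ ≤ _ := by simpa [dyadicPoint, sub_eq_add_neg] using h

lemma iUnion_Ico_dyadicPoint : ⋃ n, Ico (dyadicPoint n) (dyadicPoint (n + 1)) = Ico 0 1 := by
  refine Subset.antisymm (iUnion_subset fun n =>
    Ico_subset_Ico (dyadicPoint_nonneg n) (dyadicPoint_lt_one _).le) fun r hr => ?_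
  obtain ⟨N, hN⟩ := exists_pow_lt_of_lt_one (sub_pos.2 hr.2) (by norm_num : (2⁻¹ : ℝ) < 1)
  have hr' : r ∈ Ico (dyadicPoint 0) (dyadicPoint N) :=
    ⟨by simpa [dyadicPoint] using hr.1, by rw [dyadicPoint]; linarith⟩
  obtain ⟨i, -, hi⟩ := mem_iUnion₂.1 (Ico_subset_biUnion_Ico N dyadicPoint hr')
  exact mem_iUnion.2 ⟨i, hi⟩

lemma lintegral_Ico_one_sub_rpow {α a b : ℝ} (hα : -1 < α) (hab : a ≤ b) (hb : b ≤ 1) :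
    ∫⁻ r in Ico a b, ENNReal.ofReal ((1 - r) ^ α)
      = ENNReal.ofReal (((1 - a) ^ (α + 1) - (1 - b) ^ (α + 1)) / (α + 1)) := by
  have hint : IntervalIntegrable (fun r => (1 - r) ^ α) volume a b := by
    simpa using
      (intervalIntegral.intervalIntegrable_rpow' hα (a := 1 - a) (b := 1 - b)).comp_sub_left 1
  rw [setLIntegral_congr Ico_ae_eq_Ioc, ← ofReal_integral_eq_lintegral_ofReal
      ((intervalIntegrable_iff_integrableOn_Ioc_of_le hab).1 hint),
    ← intervalIntegral.integral_of_le hab, intervalIntegral.integral_comp_sub_left (fun x => x ^ α),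
    integral_rpow (Or.inl hα)]
  filter_upwards [ae_restrict_mem measurableSet_Ioc] with r hr
  exact Real.rpow_nonneg (by linarith [hr.2]) _

lemma lintegral_Ico_dyadicPoint_one_sub_rpow {α : ℝ} (hα : -1 < α) (n : ℕ) :
    ∫⁻ r in Ico (dyadicPoint n) (dyadicPoint (n + 1)), ENNReal.ofReal ((1 - r) ^ α)
      = ENNReal.ofReal ((1 - 2⁻¹ ^ (α + 1)) / (α + 1)) * ENNReal.ofReal (2⁻¹ ^ (α + 1)) ^ n := by
  rw [lintegral_Ico_one_sub_rpow hα (dyadicPoint_monotone n.le_succ) (dyadicPoint_lt_one _).le,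
    one_sub_dyadicPoint, one_sub_dyadicPoint, ← Real.rpow_pow_comm (by norm_num),
    ← Real.rpow_pow_comm (by norm_num), ← ENNReal.ofReal_pow (by positivity),
    ← ENNReal.ofReal_mul (div_nonneg (sub_nonneg.2 (Real.rpow_le_one (by norm_num) (by norm_num)
      (by linarith))) (by linarith))]
  congr 1
  rw [pow_succ]
  ring

lemma lintegral_mul_one_sub_rpow_lt_top_iff {G : ℝ → ℝ≥0∞} (hG : Monotone G) {α : ℝ}
    (hα : -1 < α) :
    ∫⁻ r in Ico 0 1, G r * ENNReal.ofReal ((1 - r) ^ α) < ∞ ↔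
      ∑' n, ENNReal.ofReal (2⁻¹ ^ (α + 1)) ^ n * G (dyadicPoint n) < ∞ := by
  set q := ENNReal.ofReal (2⁻¹ ^ (α + 1))
  set κ := ENNReal.ofReal ((1 - 2⁻¹ ^ (α + 1)) / (α + 1))
  set w := fun r : ℝ => ENNReal.ofReal ((1 - r) ^ α)
  set I := fun n => ∫⁻ r in Ico (dyadicPoint n) (dyadicPoint (n + 1)), G r * w r
  have hq1 : (2⁻¹ : ℝ) ^ (α + 1) < 1 := Real.rpow_lt_one (by norm_num) (by norm_num) (by linarith)
  have hq0 : q ≠ 0 := (ENNReal.ofReal_pos.2 (by positivity)).ne'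
  have hκ0 : κ ≠ 0 := (ENNReal.ofReal_pos.2 (div_pos (sub_pos.2 hq1) (by linarith))).ne'
  have hpiece : ∀ n, κ * (q ^ n * G (dyadicPoint n)) ≤ I n ∧
      I n ≤ κ * (q ^ n * G (dyadicPoint (n + 1))) := by
    intro n
    have hconst : ∀ y, ∫⁻ r in Ico (dyadicPoint n) (dyadicPoint (n + 1)), y * w r
        = κ * (q ^ n * y) := fun y => by
      rw [lintegral_const_mul _ (by fun_prop), lintegral_Ico_dyadicPoint_one_sub_rpow hα]; ring
    rw [← hconst, ← hconst]
    exact ⟨setLIntegral_mono' measurableSet_Ico fun r hr => mul_le_mul_left (hG hr.1) _,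
      setLIntegral_mono' measurableSet_Ico fun r hr => mul_le_mul_left (hG hr.2.le) _⟩
  have hlower : κ * ∑' n, q ^ n * G (dyadicPoint n) ≤ ∑' n, I n := by
    rw [← ENNReal.tsum_mul_left]; exact ENNReal.tsum_le_tsum fun n => (hpiece n).1
  have hupper : ∑' n, I n ≤ κ * (q⁻¹ ^ 1 * ∑' n, q ^ n * G (dyadicPoint n)) :=
    calc ∑' n, I n ≤ ∑' n, κ * (q ^ n * G (dyadicPoint (n + 1))) :=
          ENNReal.tsum_le_tsum fun n => (hpiece n).2
      _ ≤ _ := by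
        rw [ENNReal.tsum_mul_left]
        exact mul_le_mul_right (tsum_pow_mul_add_le hq0 ENNReal.ofReal_ne_top _ 1) _
  rw [← iUnion_Ico_dyadicPoint, lintegral_iUnion (fun n => measurableSet_Ico)
    (by simpa using dyadicPoint_monotone.pairwise_disjoint_on_Ico_succ)]
  refine ⟨fun h => ENNReal.lt_top_of_mul_ne_top_right (hlower.trans_lt h).ne hκ0, fun h => ?_⟩
  exact hupper.trans_lt (ENNReal.mul_lt_top ENNReal.ofReal_lt_top
    (ENNReal.mul_lt_top (by simpa [pos_iff_ne_zero] using hq0) h))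

lemma ofReal_dyadicPoint_le_one (n : ℕ) : ENNReal.ofReal (dyadicPoint n) ≤ 1 :=
  ENNReal.ofReal_le_one.2 (dyadicPoint_lt_one n).le

lemma ofReal_dyadicPoint_pow_two_pow_add_le (n j : ℕ) :
    ENNReal.ofReal (dyadicPoint n) ^ 2 ^ (n + j) ≤ 2⁻¹ ^ 2 ^ j := by
  rw [pow_add, pow_mul, ← ENNReal.ofReal_pow (dyadicPoint_nonneg n)]
  refine pow_le_pow_left' ?_ _
  simpa [ENNReal.ofReal_inv_of_pos] using ENNReal.ofReal_le_ofReal (dyadicPoint_pow_two_pow_le n)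

lemma inv_two_le_ofReal_dyadicPoint_succ_pow (n : ℕ) :
    2⁻¹ ≤ ENNReal.ofReal (dyadicPoint (n + 1)) ^ 2 ^ n := by
  rw [← ENNReal.ofReal_pow (dyadicPoint_nonneg _)]
  simpa [ENNReal.ofReal_inv_of_pos] using
    ENNReal.ofReal_le_ofReal (inv_two_le_dyadicPoint_succ_pow n)

lemma tsum_geom_mul_rpow_sum_Ico_le (c : ℕ → ℝ≥0∞) {q : ℝ≥0∞} (hq0 : q ≠ 0) (hq : q ≠ ∞)
    {p : ℝ} (hp : 0 ≤ p) :
    ∑' n, q ^ n * (∑ k ∈ Finset.Ico (2 ^ n) (2 ^ (n + 1)), c k) ^ p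
      ≤ 2 ^ p * (q⁻¹ ^ 2 *
        ∑' n, q ^ n * (∑' k, c k * ENNReal.ofReal (dyadicPoint n) ^ k) ^ p) := by
  set F := fun n => ∑' k, c k * ENNReal.ofReal (dyadicPoint n) ^ k
  have hblock : ∀ n, ∑ k ∈ Finset.Ico (2 ^ n) (2 ^ (n + 1)), c k ≤ 2 * F (n + 2) := fun n =>
    calc ∑ k ∈ Finset.Ico (2 ^ n) (2 ^ (n + 1)), c k
        = 2 * (2⁻¹ * ∑ k ∈ Finset.Ico (2 ^ n) (2 ^ (n + 1)), c k) := by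
          rw [← mul_assoc, ENNReal.mul_inv_cancel two_ne_zero ENNReal.ofNat_ne_top, one_mul]
      _ ≤ 2 * (ENNReal.ofReal (dyadicPoint (n + 2)) ^ 2 ^ (n + 1) *
            ∑ k ∈ Finset.Ico (2 ^ n) (2 ^ (n + 1)), c k) :=
          mul_le_mul_right (mul_le_mul_left (inv_two_le_ofReal_dyadicPoint_succ_pow _) _) _
      _ ≤ 2 * F (n + 2) :=
          mul_le_mul_right (sum_Ico_mul_pow_le_tsum_mul_pow c (ofReal_dyadicPoint_le_one _) n) _
  calc ∑' n, q ^ n * (∑ k ∈ Finset.Ico (2 ^ n) (2 ^ (n + 1)), c k) ^ p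
      ≤ ∑' n, 2 ^ p * (q ^ n * F (n + 2) ^ p) := ENNReal.tsum_le_tsum fun n => by
        rw [mul_left_comm, ← ENNReal.mul_rpow_of_nonneg _ _ hp]
        exact mul_le_mul_right (ENNReal.rpow_le_rpow (hblock n) hp) _
    _ ≤ 2 ^ p * (q⁻¹ ^ 2 * ∑' n, q ^ n * F n ^ p) := by
        rw [ENNReal.tsum_mul_left]
        exact mul_le_mul_right (tsum_pow_mul_add_le hq0 hq (fun n => F n ^ p) 2) _

lemma tsum_geom_mul_rpow_tsum_mul_pow_lt_top {c : ℕ → ℝ≥0∞} (hc0 : c 0 ≠ ∞) {q : ℝ≥0∞}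
    (hq0 : q ≠ 0) (hq1 : q < 1) {p : ℝ} (hp : 0 < p)
    (h : ∑' n, q ^ n * (∑ k ∈ Finset.Ico (2 ^ n) (2 ^ (n + 1)), c k) ^ p < ∞) :
    ∑' n, q ^ n * (∑' k, c k * ENNReal.ofReal (dyadicPoint n) ^ k) ^ p < ∞ := by
  set T := fun m => ∑ k ∈ Finset.Ico (2 ^ m) (2 ^ (m + 1)), c k
  set H := fun n => ∑' m, ENNReal.ofReal (dyadicPoint n) ^ 2 ^ m * T m
  set L := ENNReal.LpAddConst (ENNReal.ofReal p)⁻¹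
  obtain ⟨K, hK, hHardy⟩ := exists_tsum_geom_mul_rpow_tsum_le hq0 hq1
    (ENNReal.inv_lt_one.2 ENNReal.one_lt_two) hp
  have hrow : ∀ n, (∑' k, c k * ENNReal.ofReal (dyadicPoint n) ^ k) ^ p
      ≤ L * (c 0 ^ p + H n ^ p) := fun n => by
    refine (ENNReal.rpow_le_rpow ?_ hp.le).trans (ENNReal.rpow_add_le_mul_rpow_add_rpow' _ _ hp.le)
    exact tsum_mul_pow_le_add_tsum_sum_Ico_mul_pow c (ofReal_dyadicPoint_le_one n)
  calc ∑' n, q ^ n * (∑' k, c k * ENNReal.ofReal (dyadicPoint n) ^ k) ^ p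
      ≤ ∑' n, L * (c 0 ^ p * q ^ n + q ^ n * H n ^ p) := ENNReal.tsum_le_tsum fun n =>
        (mul_le_mul_right (hrow n) _).trans_eq (by ring)
    _ = L * (c 0 ^ p * (1 - q)⁻¹ + ∑' n, q ^ n * H n ^ p) := by
        rw [ENNReal.tsum_mul_left, ENNReal.tsum_add, ENNReal.tsum_mul_left, ENNReal.tsum_geometric]
    _ ≤ L * (c 0 ^ p * (1 - q)⁻¹ + K * ∑' m, q ^ m * T m ^ p) :=
        mul_le_mul_right (add_le_add_right (hHardy _ _
          (fun n m => pow_le_one' (ofReal_dyadicPoint_le_one n) _)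
          ofReal_dyadicPoint_pow_two_pow_add_le) _) _
    _ < ∞ := by
        refine ENNReal.mul_lt_top (ENNReal.LpAddConst_lt_top _)
          (ENNReal.add_lt_top.2 ⟨ENNReal.mul_lt_top ?_ ?_, ENNReal.mul_lt_top hK.lt_top h⟩)
        · exact ENNReal.rpow_lt_top_of_nonneg hp.le hc0
        · exact ENNReal.inv_lt_top.2 (tsub_pos_of_lt hq1)

lemma tsum_geom_mul_rpow_tsum_mul_pow_lt_top_iff {c : ℕ → ℝ≥0∞} (hc0 : c 0 ≠ ∞) {q : ℝ≥0∞}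
    (hq0 : q ≠ 0) (hq1 : q < 1) {p : ℝ} (hp : 0 < p) :
    ∑' n, q ^ n * (∑' k, c k * ENNReal.ofReal (dyadicPoint n) ^ k) ^ p < ∞ ↔
      ∑' n, q ^ n * (∑ k ∈ Finset.Ico (2 ^ n) (2 ^ (n + 1)), c k) ^ p < ∞ :=
  ⟨fun h => (tsum_geom_mul_rpow_sum_Ico_le c hq0 hq1.ne_top hp.le).trans_lt
      (ENNReal.mul_lt_top (ENNReal.rpow_lt_top_of_nonneg hp.le ENNReal.ofNat_ne_top)
        (ENNReal.mul_lt_top (ENNReal.pow_lt_top (ENNReal.inv_lt_top.2 (pos_iff_ne_zero.2 hq0))) h)),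
    tsum_geom_mul_rpow_tsum_mul_pow_lt_top hc0 hq0 hq1 hp⟩

lemma lintegral_Ioo_ofReal_tsum_rpow_mul_eq {c : ℕ → ℝ} (hc : ∀ k, 0 ≤ c k)
    (hrad : ∀ r : ℝ, 0 ≤ r → r < 1 → Summable fun k => c k * r ^ k) {p : ℝ} (hp : 0 ≤ p)
    (α : ℝ) :
    ∫⁻ r in Ioo 0 1, ENNReal.ofReal ((∑' k, c k * r ^ k) ^ p * (1 - r) ^ α)
      = ∫⁻ r in Ico 0 1, (∑' k, ENNReal.ofReal (c k) * ENNReal.ofReal r ^ k) ^ p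
          * ENNReal.ofReal ((1 - r) ^ α) := by
  rw [setLIntegral_congr Ioo_ae_eq_Ico]
  refine setLIntegral_congr_fun measurableSet_Ico fun r ⟨hr0, hr1⟩ => ?_
  have hterm : ∀ k, 0 ≤ c k * r ^ k := fun k => mul_nonneg (hc k) (pow_nonneg hr0 k)
  have hnn : 0 ≤ ∑' k, c k * r ^ k := tsum_nonneg hterm
  rw [ENNReal.ofReal_mul (Real.rpow_nonneg hnn p), ← ENNReal.ofReal_rpow_of_nonneg hnn hp,
    ENNReal.ofReal_tsum_of_nonneg hterm (hrad r hr0 hr1)]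
  simp_rw [ENNReal.ofReal_mul (hc _), ENNReal.ofReal_pow hr0]

lemma ofReal_two_rpow_mul_sum_rpow {c : ℕ → ℝ} (hc : ∀ k, 0 ≤ c k) (s : Finset ℕ) {p : ℝ}
    (hp : 0 ≤ p) (n : ℕ) (a : ℝ) :
    ENNReal.ofReal ((2 : ℝ) ^ (-(n : ℝ) * a) * (∑ k ∈ s, c k) ^ p)
      = ENNReal.ofReal (2⁻¹ ^ a) ^ n * (∑ k ∈ s, ENNReal.ofReal (c k)) ^ p := by
  have hnn : 0 ≤ ∑ k ∈ s, c k := Finset.sum_nonneg fun k _ => hc k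
  have hpow : (2 : ℝ) ^ (-(n : ℝ) * a) = ((2⁻¹ : ℝ) ^ a) ^ n := by
    rw [← Real.rpow_natCast, ← Real.rpow_mul (by norm_num), Real.inv_rpow (by norm_num),
      ← Real.rpow_neg (by norm_num)]
    ring_nf
  rw [ENNReal.ofReal_mul (by positivity), hpow, ENNReal.ofReal_pow (by positivity),
    ← ENNReal.ofReal_rpow_of_nonneg hnn hp, ENNReal.ofReal_sum_of_nonneg fun k _ => hc k]

/-- Theorem 1 of Mateljević–Pavlović: for `0 < p < ∞`, `α > −1`, and `c_k ≥ 0` whose power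
series has radius of convergence at least 1,
`∫₀¹ (Σ c_k r^k)^p (1−r)^α dr < ∞` iff
`Σ_n 2^{-n(α+1)} (Σ_{k=2ⁿ}^{2^{n+1}−1} c_k)^p < ∞`. -/
theorem stmt17 (p α : ℝ) (hp : 0 < p) (hα : -1 < α)
    (c : ℕ → ℝ) (hc : ∀ k, 0 ≤ c k)
    (hrad : ∀ r : ℝ, 0 ≤ r → r < 1 → Summable (fun k => c k * r ^ k)) :
    (∫⁻ r in Set.Ioo (0:ℝ) 1,
        ENNReal.ofReal ((∑' k : ℕ, c k * r ^ k) ^ p * (1 - r) ^ α) < ⊤)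
      ↔ (∑' n : ℕ, ENNReal.ofReal ((2 : ℝ) ^ (-(n : ℝ) * (α + 1)) *
          (∑ k ∈ Finset.Ico (2 ^ n) (2 ^ (n + 1)), c k) ^ p)) < ⊤ := by
  have hG : Monotone fun r : ℝ => (∑' k, ENNReal.ofReal (c k) * ENNReal.ofReal r ^ k) ^ p :=
    fun r s hrs => ENNReal.rpow_le_rpow (ENNReal.tsum_le_tsum fun k =>
      mul_le_mul_right (pow_le_pow_left' (ENNReal.ofReal_le_ofReal hrs) k) _) hp.le
  have hq1 : (2⁻¹ : ℝ) ^ (α + 1) < 1 := Real.rpow_lt_one (by norm_num) (by norm_num) (by linarith)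
  simp_rw [lintegral_Ioo_ofReal_tsum_rpow_mul_eq hc hrad hp.le,
    ofReal_two_rpow_mul_sum_rpow hc _ hp.le, lintegral_mul_one_sub_rpow_lt_top_iff hG hα]
  exact tsum_geom_mul_rpow_tsum_mul_pow_lt_top_iff ENNReal.ofReal_ne_top
    (ENNReal.ofReal_pos.2 (by positivity)).ne' (ENNReal.ofReal_lt_one.2 hq1) hp
end
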